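/- Let p, q ∈ (0,1) with p < q, and on X̃ = {0,1}^ℤ let μ = ⊗_{n∈ℤ} μ_n where μ_n(0) = p for n ≤ 0 and μ_n(0) = q for n > 0. Let T̃ be the two-sided shift. Then for every n > 0 and μ-a.e. x, the Radon–Nikodym derivative satisfies d(μ∘T̃^n)/dμ (x) = (p/q)^n · ( q(1-p) / (p(1-q)) )^{x₁+⋯+x_n}. -/

import Mathlib

open MeasureTheory Filter ENNReal

namespace Stmt5Aux

abbrev X := ℤ → Fin 2

def atom (s : Finset ℤ) (a : ℤ → Fin 2) : Set X := {x | ∀ i ∈ s, x i = a i}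

lemma atom_measurableSet (s : Finset ℤ) (a : ℤ → Fin 2) : MeasurableSet (atom s a) := by
  have h : atom s a = ⋂ i ∈ s, (fun x : X => x i) ⁻¹' {a i} := by
    ext x; simp [atom]
  rw [h]
  exact MeasurableSet.biInter s.countable_toSet fun i _ =>
    (measurable_pi_apply i) (measurableSet_singleton _)

def C (t : Finset ℤ) : Set (Set X) := {S | ∃ s a, t ⊆ s ∧ S = atom s a}

lemma isPiSystem_C (t : Finset ℤ) : IsPiSystem (C t) := by
  rintro S ⟨s, a, hts, rfl⟩ S' ⟨s', a', hts', rfl⟩ ⟨x, hx, hx'⟩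
  refine ⟨s ∪ s', fun i => if i ∈ s then a i else a' i, hts.trans Finset.subset_union_left, ?_⟩
  ext y
  simp only [atom, Set.mem_inter_iff, Set.mem_setOf_eq, Finset.mem_union]
  constructor
  · rintro ⟨h1, h2⟩ i hi
    rcases hi with hi | hi
    · rw [if_pos hi]; exact h1 i hi
    · by_cases his : i ∈ s
      · rw [if_pos his]; exact h1 i his
      · rw [if_neg his]; exact h2 i hi
  · intro h
    constructor
    · intro i hi
      have := h i (Or.inl hi); rwa [if_pos hi] at this
    · intro i hi
      have := h i (Or.inr hi)
      by_cases his : i ∈ s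
      · rw [if_pos his] at this
        rw [this]
        rw [← hx i his, ← hx' i hi]
      · rwa [if_neg his] at this

lemma generateFrom_C (t : Finset ℤ) :
    (inferInstance : MeasurableSpace X) = MeasurableSpace.generateFrom (C t) := by
  refine le_antisymm ?_ (MeasurableSpace.generateFrom_le ?_)
  · have hid : @Measurable X X (MeasurableSpace.generateFrom (C t)) _ id := by
      refine (@measurable_pi_iff X ℤ (fun _ => Fin 2)
          (MeasurableSpace.generateFrom (C t)) _ id).2 fun i => ?_
      refine @measurable_to_countable' (Fin 2) X _ _
          (MeasurableSpace.generateFrom (C t)) _ fun c => ?_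
      have hset : ((fun x : X => id x i) ⁻¹' {c}) =
          ⋃ b : {j // j ∈ t} → Fin 2,
            atom (insert i t) (Function.update (fun j => if h : j ∈ t then b ⟨j, h⟩ else 0) i c) := by
        ext x
        simp only [Set.mem_preimage, Set.mem_singleton_iff, Set.mem_iUnion, id_eq]
        constructor
        · intro hxc
          refine ⟨fun j => x j.1, fun j hj => ?_⟩
          rcases Finset.mem_insert.1 hj with rfl | hjt
          · rw [Function.update_self]; exact hxc
          · by_cases hji : j = i
            · subst hji; rw [Function.update_self]; exact hxc
            · rw [Function.update_of_ne hji, dif_pos hjt]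
        · rintro ⟨b, hb⟩
          have := hb i (Finset.mem_insert_self i t)
          rwa [Function.update_self] at this
      rw [hset]
      exact MeasurableSet.iUnion fun b =>
        MeasurableSpace.measurableSet_generateFrom
          ⟨insert i t, _, Finset.subset_insert i t, rfl⟩
    intro s hs
    exact hid hs
  · rintro S ⟨s, a, -, rfl⟩
    exact atom_measurableSet s a



lemma fin2_cases (v : Fin 2) : v = 0 ∨ v = 1 := by revert v; decide

section Real
variable {p q : ℝ} {mar : ℤ → Fin 2 → ℝ}
variable (hp : 0 < p) (hpq : p < q) (hq : q < 1)
variable (hmar0 : ∀ i : ℤ, i ≤ 0 → mar i 0 = p)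
variable (hmar1 : ∀ i : ℤ, 0 < i → mar i 0 = q)
variable (hmar2 : ∀ i : ℤ, mar i 1 = 1 - mar i 0)

include hp hpq hq hmar0 hmar1 hmar2

lemma mar_nonneg : ∀ i v, 0 ≤ mar i v := by
  intro i v
  have h01 : mar i 0 = p ∨ mar i 0 = q := by
    rcases le_or_gt i 0 with h | h
    · exact Or.inl (hmar0 i h)
    · exact Or.inr (hmar1 i h)
  rcases fin2_cases v with rfl | rfl
  · rcases h01 with h | h <;> rw [h] <;> linarith
  · rw [hmar2 i]; rcases h01 with h | h <;> rw [h] <;> linarith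

lemma mar_pointwise (n : ℕ) (i : ℤ) (hi1 : 1 ≤ i) (hi2 : i ≤ n) (v : Fin 2) :
    mar (i - n) v = p / q * (q * (1 - p) / (p * (1 - q))) ^ (v : ℕ) * mar i v := by
  have hin : i - (n : ℤ) ≤ 0 := by omega
  have hq0 : q ≠ 0 := by linarith
  have hp0 : p ≠ 0 := ne_of_gt hp
  have h1q : (1 : ℝ) - q ≠ 0 := by linarith
  rcases fin2_cases v with rfl | rfl
  · rw [hmar0 _ hin, hmar1 _ (by omega : (0:ℤ) < i)]
    simp only [Fin.val_zero, pow_zero, mul_one]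
    field_simp
  · rw [hmar2, hmar2, hmar0 _ hin, hmar1 _ (by omega : (0:ℤ) < i)]
    simp only [Fin.val_one, pow_one]
    field_simp

lemma mar_offdiag (n : ℕ) (i : ℤ) (hi : i < 1 ∨ (n : ℤ) < i) (v : Fin 2) :
    mar (i - n) v = mar i v := by
  have h0 : mar (i - n) 0 = mar i 0 := by
    rcases hi with h | h
    · rw [hmar0 _ (by omega), hmar0 _ (by omega)]
    · rw [hmar1 _ (by omega), hmar1 _ (by omega)]
  rcases fin2_cases v with rfl | rfl
  · exact h0
  · rw [hmar2, hmar2, h0]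

lemma prod_real (n : ℕ) (hn : 0 < n) (s : Finset ℤ) (hts : Finset.Icc (1 : ℤ) n ⊆ s)
    (a : ℤ → Fin 2) :
    ∏ i ∈ s, mar (i - n) (a i) =
      (p / q) ^ n * (q * (1 - p) / (p * (1 - q))) ^ (∑ i ∈ Finset.Icc (1 : ℤ) n, ((a i : ℕ)))
        * ∏ i ∈ s, mar i (a i) := by
  set t : Finset ℤ := Finset.Icc (1 : ℤ) n with ht
  have hcard : t.card = n := by
    rw [ht, Int.card_Icc]
    omega
  rw [← Finset.prod_sdiff hts, ← Finset.prod_sdiff hts]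
  have hoff : ∏ i ∈ s \ t, mar (i - n) (a i) = ∏ i ∈ s \ t, mar i (a i) := by
    refine Finset.prod_congr rfl fun i hi => ?_
    have : i ∉ t := (Finset.mem_sdiff.1 hi).2
    rw [ht, Finset.mem_Icc] at this
    exact mar_offdiag hp hpq hq hmar0 hmar1 hmar2 n i (by omega) _
  have hon : ∏ i ∈ t, mar (i - n) (a i) =
      (p / q) ^ n * (q * (1 - p) / (p * (1 - q))) ^ (∑ i ∈ t, ((a i : ℕ)))
        * ∏ i ∈ t, mar i (a i) := by
    have h1 : ∏ i ∈ t, mar (i - n) (a i) =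
        ∏ i ∈ t, (p / q * (q * (1 - p) / (p * (1 - q))) ^ ((a i : ℕ)) * mar i (a i)) := by
      refine Finset.prod_congr rfl fun i hi => ?_
      rw [ht, Finset.mem_Icc] at hi
      exact mar_pointwise hp hpq hq hmar0 hmar1 hmar2 n i hi.1 hi.2 _
    rw [h1]
    rw [Finset.prod_mul_distrib, Finset.prod_mul_distrib, Finset.prod_const, hcard,
      Finset.prod_pow_eq_pow_sum]
  rw [hoff, hon]
  ring

end Real

section Main
variable {p q : ℝ} {mar : ℤ → Fin 2 → ℝ}
variable (hp : 0 < p) (hpq : p < q) (hq : q < 1)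
variable (hmar0 : ∀ i : ℤ, i ≤ 0 → mar i 0 = p)
variable (hmar1 : ∀ i : ℤ, 0 < i → mar i 0 = q)
variable (hmar2 : ∀ i : ℤ, mar i 1 = 1 - mar i 0)


include hp hpq hq hmar0 hmar1 hmar2

theorem measure_map_eq_withDensity (μ : Measure X) [IsProbabilityMeasure μ]
    (hcyl : ∀ (s : Finset ℤ) (a : ℤ → Fin 2),
      μ {x | ∀ i ∈ s, x i = a i} = ∏ i ∈ s, ENNReal.ofReal (mar i (a i)))
    (n : ℕ) (hn : 0 < n) :
    μ.map (fun (x : X) (k : ℤ) => x (k - n)) =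
      μ.withDensity (fun x => ENNReal.ofReal
        ((p / q) ^ n *
          (q * (1 - p) / (p * (1 - q))) ^ (∑ i ∈ Finset.Icc (1 : ℤ) n, ((x i : ℕ))))) := by
  have hmn := mar_nonneg hp hpq hq hmar0 hmar1 hmar2
  set t : Finset ℤ := Finset.Icc (1 : ℤ) n with ht
  set r : ℝ := q * (1 - p) / (p * (1 - q)) with hr
  set f : X → X := fun (x : X) (k : ℤ) => x (k - n) with hf
  set g : X → ℝ≥0∞ := fun x => ENNReal.ofReal ((p / q) ^ n * r ^ (∑ i ∈ t, ((x i : ℕ)))) with hg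
  have hfm : Measurable f := measurable_pi_lambda _ fun k => measurable_pi_apply _
  have hgm : Measurable g := by
    have hN : Measurable (fun x : X => ∑ i ∈ t, ((x i : ℕ))) :=
      Finset.measurable_sum _ fun i _ => measurable_from_top.comp (measurable_pi_apply i)
    exact (measurable_from_top (f := fun k : ℕ => ENNReal.ofReal ((p / q) ^ n * r ^ k))).comp hN
  have hr1 : (1 : ℝ) ≤ r := by
    rw [hr]
    rw [le_div_iff₀ (by nlinarith : (0:ℝ) < p * (1 - q))]
    nlinarith
  have hC0 : (0:ℝ) ≤ (p / q) ^ n := pow_nonneg (div_nonneg hp.le (by linarith)) n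
  -- key computation on atoms
  have key : ∀ (s : Finset ℤ) (a : ℤ → Fin 2), t ⊆ s →
      (μ.map f) (atom s a) = (μ.withDensity g) (atom s a) := by
    intro s a hts
    -- LHS
    have hpre : f ⁻¹' atom s a = atom (s.image (fun i => i - (n : ℤ))) (fun j => a (j + n)) := by
      ext x
      simp only [atom, Set.mem_preimage, Set.mem_setOf_eq, Finset.mem_image, hf]
      constructor
      · rintro h j ⟨i, his, rfl⟩
        rw [sub_add_cancel]
        exact h i his
      · intro h i his
        have := h (i - n) ⟨i, his, rfl⟩
        rwa [sub_add_cancel] at this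
    have hLHS : (μ.map f) (atom s a) = ∏ i ∈ s, ENNReal.ofReal (mar (i - n) (a i)) := by
      rw [Measure.map_apply hfm (atom_measurableSet s a), hpre]
      rw [show atom (s.image (fun i => i - (n : ℤ))) (fun j => a (j + n)) =
        {x : X | ∀ i ∈ s.image (fun i => i - (n : ℤ)), x i = a (i + n)} from rfl]
      rw [hcyl]
      rw [Finset.prod_image (fun i _ j _ h => by omega)]
      exact Finset.prod_congr rfl fun i _ => by rw [sub_add_cancel]
    -- RHS
    have hconst : ∀ x ∈ atom s a, g x =
        ENNReal.ofReal ((p / q) ^ n * r ^ (∑ i ∈ t, ((a i : ℕ)))) := by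
      intro x hx
      simp only [hg]
      have hsum : ∑ i ∈ t, ((x i : ℕ)) = ∑ i ∈ t, ((a i : ℕ)) :=
        Finset.sum_congr rfl fun i hi => by rw [hx i (hts hi)]
      rw [hsum]
    have hRHS : (μ.withDensity g) (atom s a) =
        ENNReal.ofReal ((p / q) ^ n * r ^ (∑ i ∈ t, ((a i : ℕ)))) *
          ∏ i ∈ s, ENNReal.ofReal (mar i (a i)) := by
      rw [withDensity_apply g (atom_measurableSet s a)]
      rw [setLIntegral_congr_fun (atom_measurableSet s a) hconst]
      rw [setLIntegral_const]
      rw [show atom s a = {x : X | ∀ i ∈ s, x i = a i} from rfl, hcyl]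
    rw [hLHS, hRHS]
    rw [← ENNReal.ofReal_prod_of_nonneg (fun i _ => hmn _ _),
      ← ENNReal.ofReal_prod_of_nonneg (fun i _ => hmn _ _),
      ← ENNReal.ofReal_mul (by positivity)]
    congr 1
    exact prod_real hp hpq hq hmar0 hmar1 hmar2 n hn s hts a
  -- finiteness of withDensity
  haveI hfin : IsFiniteMeasure (μ.withDensity g) := by
    refine isFiniteMeasure_withDensity (μ := μ) (f := g) ?_
    have hb : ∀ x, g x ≤ ENNReal.ofReal ((p / q) ^ n * r ^ n) := by
      intro x
      refine ENNReal.ofReal_le_ofReal ?_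
      refine mul_le_mul_of_nonneg_left ?_ hC0
      refine pow_le_pow_right₀ hr1 ?_
      calc ∑ i ∈ t, ((x i : ℕ)) ≤ ∑ i ∈ t, 1 :=
            Finset.sum_le_sum fun i _ => Fin.is_le (x i)
        _ = t.card := by simp
        _ ≤ n := by rw [ht, Int.card_Icc]; omega
    have hle : ∫⁻ x, g x ∂μ ≤ ENNReal.ofReal ((p / q) ^ n * r ^ n) := by
      calc ∫⁻ x, g x ∂μ ≤ ∫⁻ _, ENNReal.ofReal ((p / q) ^ n * r ^ n) ∂μ := lintegral_mono hb
        _ = ENNReal.ofReal ((p / q) ^ n * r ^ n) := by simp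
    exact ne_top_of_le_ne_top ENNReal.ofReal_ne_top hle
  haveI : IsProbabilityMeasure (μ.map f) := Measure.isProbabilityMeasure_map hfm.aemeasurable
  -- universe decomposition
  have huniv : (μ.map f) Set.univ = (μ.withDensity g) Set.univ := by
    set E : ({j // j ∈ t} → Fin 2) → Set X :=
      fun b => atom t (fun i => if h : i ∈ t then b ⟨i, h⟩ else 0) with hE
    have hcover : ⋃ b, E b = Set.univ := by
      ext x
      simp only [Set.mem_iUnion, Set.mem_univ, iff_true, hE, atom, Set.mem_setOf_eq]
      exact ⟨fun j => x j.1, fun i hi => by rw [dif_pos hi]⟩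
    have hdisj : Pairwise (Function.onFun Disjoint E) := by
      intro b b' hbb'
      rw [Function.onFun, Set.disjoint_left]
      intro x hxb hxb'
      apply hbb'
      funext j
      have h1 := hxb j.1 j.2
      have h2 := hxb' j.1 j.2
      simp only [dif_pos j.2] at h1 h2
      exact h1.symm.trans h2
    have hmeasE : ∀ b, MeasurableSet (E b) := fun b => atom_measurableSet _ _
    rw [← hcover, measure_iUnion hdisj hmeasE, measure_iUnion hdisj hmeasE]
    exact tsum_congr fun b => key t _ Finset.Subset.rfl
  refine ext_of_generate_finite (C t) (generateFrom_C t) (isPiSystem_C t) ?_ huniv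
  rintro S ⟨s, a, hts, rfl⟩
  exact key s a hts

end Main

end Stmt5Aux

/-- For the Krengel-type product measure on `{0,1}^ℤ` with marginal `p` on coordinates
`≤ 0` and `q` on coordinates `> 0`, the Radon–Nikodym derivative of `μ ∘ T̃ⁿ`
with respect to `μ` is `(p/q)^n (q(1-p)/(p(1-q)))^{x₁+⋯+x_n}` a.e. -/
theorem stmt5 (p q : ℝ) (hp : 0 < p) (hpq : p < q) (hq : q < 1)
    (mar : ℤ → Fin 2 → ℝ)
    (hmar0 : ∀ i : ℤ, i ≤ 0 → mar i 0 = p)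
    (hmar1 : ∀ i : ℤ, 0 < i → mar i 0 = q)
    (hmar2 : ∀ i : ℤ, mar i 1 = 1 - mar i 0)
    (μ : Measure (ℤ → Fin 2)) [IsProbabilityMeasure μ]
    (hcyl : ∀ (s : Finset ℤ) (a : ℤ → Fin 2),
      μ {x | ∀ i ∈ s, x i = a i} = ∏ i ∈ s, ENNReal.ofReal (mar i (a i))) :
    ∀ n : ℕ, 0 < n →
      (μ.map (fun (x : ℤ → Fin 2) (k : ℤ) => x (k - n))).rnDeriv μ =ᵐ[μ]
        fun x => ENNReal.ofReal
          ((p / q) ^ n *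
            (q * (1 - p) / (p * (1 - q))) ^ (∑ i ∈ Finset.Icc (1 : ℤ) n, ((x i : ℕ)))) := by
  intro n hn
  have hmain := Stmt5Aux.measure_map_eq_withDensity hp hpq hq hmar0 hmar1 hmar2 μ hcyl n hn
  rw [hmain]
  have hgm : Measurable (fun x : ℤ → Fin 2 => ENNReal.ofReal
      ((p / q) ^ n *
        (q * (1 - p) / (p * (1 - q))) ^ (∑ i ∈ Finset.Icc (1 : ℤ) n, ((x i : ℕ))))) := by
    have hN : Measurable (fun x : ℤ → Fin 2 => ∑ i ∈ Finset.Icc (1 : ℤ) n, ((x i : ℕ))) :=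
      Finset.measurable_sum _ fun i _ => measurable_from_top.comp (measurable_pi_apply i)
    exact (measurable_from_top (f := fun k : ℕ => ENNReal.ofReal
      ((p / q) ^ n * (q * (1 - p) / (p * (1 - q))) ^ k))).comp hN
  exact Measure.rnDeriv_withDensity μ hgm
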